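/- Let a, b ∈ ℂ. Then there is an open neighborhood U of 0 in ℂ such that the function g(x) = ₂F₁(a, b; 1/2; x(4x-3)²) satisfies Heun's differential equation with parameters (t, q; a', b'; c'; d') = (1/4, 9ab/4; 3a, 3b; 1/2; a+b+1/2) at every x ∈ U with x ∉ {0, 1, 1/4}. -/

import Mathlib

/-! The cubic substitution `z = x (4x - 3)²` has `1 - z = (1 - x)(4x - 1)²`, so it sends `0` and
the double point `3/4` to `z = 0`, and `1` and the double point `1/4` to `z = 1`. By the chain rule,
`F ∘ z` satisfies the Heun equation in question wherever `F` satisfies Gauss's equation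
`z(1 - z)F'' + (1/2 - (a + b + 1)z)F' - abF = 0` at `z(x)`. The function `₂F₁(a, b; c; ·)` satisfies
Gauss's equation on the unit disc because its coefficients obey
`(n + 1)(n + c) cₙ₊₁ = (n + a)(n + b) cₙ`; take `U` to be the preimage of the unit disc. -/

open Complex

/-- `g` satisfies Heun's differential equation with parameters `(t, q; a, b; c; d)`
at the point `x`: `g` is twice complex differentiable at `x` and
`g''(x) + (c/x + d/(x-1) + (a+b-c-d+1)/(x-t)) g'(x) + ((a b x - q)/(x(x-1)(x-t))) g(x) = 0`. -/
def SatisfiesHeunAt (t q a b c d : ℂ) (g : ℂ → ℂ) (x : ℂ) : Prop :=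
  DifferentiableAt ℂ g x ∧ DifferentiableAt ℂ (deriv g) x ∧
    deriv (deriv g) x +
      (c / x + d / (x - 1) + (a + b - c - d + 1) / (x - t)) * deriv g x +
      ((a * b * x - q) / (x * (x - 1) * (x - t))) * g x = 0

open Filter Topology FormalMultilinearSeries

theorem HasSum.mul_pow_of_succ {R : Type*} [CommSemiring R] [TopologicalSpace R]
    [IsTopologicalSemiring R] {f : ℕ → R} {z s : R} (h : HasSum (fun n => f (n + 1) * z ^ n) s) :
    HasSum (fun n => f n * z ^ n) (f 0 + z * s) := by
  have h' : HasSum (fun n => f (n + 1) * z ^ (n + 1)) (z * s) :=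
    (h.mul_left z).congr_fun fun n => by ring
  simpa using HasSum.zero_add (f := fun n => f n * z ^ n) h'

section DerivSeries

variable {𝕜 F : Type*} [NontriviallyNormedField 𝕜] [NormedAddCommGroup F] [NormedSpace 𝕜 F]

noncomputable def FormalMultilinearSeries.derivScalarSeries (p : FormalMultilinearSeries 𝕜 𝕜 F) :
    FormalMultilinearSeries 𝕜 𝕜 F :=
  (ContinuousLinearMap.apply 𝕜 F (1 : 𝕜)).compFormalMultilinearSeries p.derivSeries

@[simp]
theorem FormalMultilinearSeries.coeff_derivScalarSeries (p : FormalMultilinearSeries 𝕜 𝕜 F)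
    (n : ℕ) : p.derivScalarSeries.coeff n = (n + 1) • p.coeff (n + 1) :=
  p.derivSeries_coeff_one n

theorem HasFPowerSeriesOnBall.hasFPowerSeriesOnBall_deriv [CompleteSpace F] {f : 𝕜 → F}
    {p : FormalMultilinearSeries 𝕜 𝕜 F} {x : 𝕜} {r : ENNReal} (h : HasFPowerSeriesOnBall f p x r) :
    HasFPowerSeriesOnBall (deriv f) p.derivScalarSeries x r := by
  convert (ContinuousLinearMap.apply 𝕜 F (1 : 𝕜)).comp_hasFPowerSeriesOnBall h.fderiv using 1
  · exact funext fun y => fderiv_apply_one_eq_deriv.symm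
  · rfl

end DerivSeries

section ScalarSeries

variable {𝕜 : Type*} [NontriviallyNormedField 𝕜] {f : 𝕜 → 𝕜} {p : FormalMultilinearSeries 𝕜 𝕜 𝕜}
  {r : ENNReal} {z : 𝕜}

theorem HasFPowerSeriesOnBall.hasSum_coeff_mul_pow (h : HasFPowerSeriesOnBall f p 0 r)
    (hz : z ∈ Metric.eball 0 r) : HasSum (fun n => p.coeff n * z ^ n) (f z) := by
  simpa only [apply_eq_pow_smul_coeff, smul_eq_mul, mul_comm, zero_add] using h.hasSum hz

variable [CompleteSpace 𝕜]

theorem HasFPowerSeriesOnBall.hasSum_mul_deriv (h : HasFPowerSeriesOnBall f p 0 r)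
    (hz : z ∈ Metric.eball 0 r) : HasSum (fun n => n * p.coeff n * z ^ n) (z * deriv f z) := by
  have h1 := h.hasFPowerSeriesOnBall_deriv.hasSum_coeff_mul_pow hz
  simp only [coeff_derivScalarSeries, nsmul_eq_mul] at h1
  simpa using h1.mul_pow_of_succ (f := fun n => (n : 𝕜) * p.coeff n)

theorem HasFPowerSeriesOnBall.hasSum_mul_deriv_deriv (h : HasFPowerSeriesOnBall f p 0 r)
    (hz : z ∈ Metric.eball 0 r) :
    HasSum (fun n => n * (n + 1) * p.coeff (n + 1) * z ^ n) (z * deriv (deriv f) z) := by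
  have h1 := h.hasFPowerSeriesOnBall_deriv.hasSum_mul_deriv hz
  simp only [coeff_derivScalarSeries, nsmul_eq_mul, Nat.cast_succ, mul_assoc] at h1
  simpa [mul_assoc] using h1

theorem HasFPowerSeriesOnBall.hasSum_sq_mul_deriv_deriv (h : HasFPowerSeriesOnBall f p 0 r)
    (hz : z ∈ Metric.eball 0 r) :
    HasSum (fun n => (n - 1) * n * p.coeff n * z ^ n) (z ^ 2 * deriv (deriv f) z) := by
  let g : ℕ → 𝕜 := fun n => (n - 1) * n * p.coeff n
  have h1 : HasSum (fun n => g (n + 1) * z ^ n) (z * deriv (deriv f) z) :=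
    (h.hasSum_mul_deriv_deriv hz).congr_fun fun n => by simp only [g]; push_cast; ring
  simpa [g, sq, mul_assoc] using h1.mul_pow_of_succ

end ScalarSeries

theorem AnalyticAt.deriv_deriv_comp {𝕜 F : Type*} [NontriviallyNormedField 𝕜] [CompleteSpace 𝕜]
    [NormedAddCommGroup F] [NormedSpace 𝕜 F] [CompleteSpace F] {f : 𝕜 → F} {p : 𝕜 → 𝕜} {x : 𝕜}
    (hf : AnalyticAt 𝕜 f (p x)) (hp : AnalyticAt 𝕜 p x) :
    deriv (deriv (f ∘ p)) x =
      deriv p x ^ 2 • deriv (deriv f) (p x) + deriv (deriv p) x • deriv f (p x) := by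
  have hderiv : deriv (f ∘ p) =ᶠ[𝓝 x] deriv p • (deriv f ∘ p) := by
    filter_upwards [hp.continuousAt.eventually hf.eventually_analyticAt, hp.eventually_analyticAt]
      with y hfy hpy
    exact deriv.scomp y hfy.differentiableAt hpy.differentiableAt
  have hprod := hp.deriv.differentiableAt.hasDerivAt.smul
    (hf.deriv.differentiableAt.hasDerivAt.scomp x hp.differentiableAt.hasDerivAt)
  rw [hderiv.deriv_eq, hprod.deriv, smul_smul, ← sq, Function.comp_apply]

section Hypergeometric

theorem mul_ordinaryHypergeometricCoefficient_succ {𝕂 : Type*} [Field 𝕂] [CharZero 𝕂]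
    (a b : 𝕂) {c : 𝕂} (hc : ∀ k : ℕ, c ≠ -k) (n : ℕ) :
    (n + 1) * (n + c) * ordinaryHypergeometricCoefficient a b c (n + 1) =
      (n + a) * (n + b) * ordinaryHypergeometricCoefficient a b c n := by
  have hpoch : (ascPochhammer 𝕂 n).eval c ≠ 0 := by
    rw [Ne, ascPochhammer_eval_eq_zero_iff]
    rintro ⟨k, -, hk⟩
    exact hc k (by rw [hk, neg_neg])
  have hcn : c + n ≠ 0 := fun h => hc n (eq_neg_of_add_eq_zero_left h)
  have hn : (n : 𝕂) + 1 ≠ 0 := by exact_mod_cast n.succ_ne_zero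
  simp only [ordinaryHypergeometricCoefficient, ascPochhammer_succ_eval, Nat.factorial_succ,
    Nat.cast_mul, Nat.cast_succ]
  field_simp
  ring

variable {𝕂 : Type*} [RCLike 𝕂] (a b : 𝕂) {c : 𝕂}

theorem one_le_radius_ordinaryHypergeometricSeries (hc : ∀ k : ℕ, c ≠ -k) :
    1 ≤ (ordinaryHypergeometricSeries 𝕂 a b c).radius := by
  by_cases hab : ∃ k : ℕ, a = -k ∨ b = -k
  · obtain ⟨k, rfl | rfl⟩ := hab
    · simp [ordinaryHypergeometric_radius_top_of_neg_nat₁]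
    · simp [ordinaryHypergeometric_radius_top_of_neg_nat₂]
  · push Not at hab
    refine (ordinaryHypergeometricSeries_radius_eq_one 𝕂 a b c fun k => ?_).ge
    exact ⟨fun h => (hab k).1 (by rw [h, neg_neg]), fun h => (hab k).2 (by rw [h, neg_neg]),
      fun h => hc k (by rw [h, neg_neg])⟩

theorem hasFPowerSeriesOnBall_ordinaryHypergeometric (hc : ∀ k : ℕ, c ≠ -k) :
    HasFPowerSeriesOnBall (ordinaryHypergeometric a b c)
      (ordinaryHypergeometricSeries 𝕂 a b c) 0 1 :=
  (ordinaryHypergeometricSeries 𝕂 a b c).hasFPowerSeriesOnBall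
    (one_pos.trans_le (one_le_radius_ordinaryHypergeometricSeries a b hc)) |>.mono one_pos
    (one_le_radius_ordinaryHypergeometricSeries a b hc)

theorem analyticOnNhd_ordinaryHypergeometric (hc : ∀ k : ℕ, c ≠ -k) :
    AnalyticOnNhd 𝕂 (ordinaryHypergeometric a b c : 𝕂 → 𝕂) (Metric.ball 0 1) := by
  simpa [← Metric.eball_ofReal] using
    (hasFPowerSeriesOnBall_ordinaryHypergeometric a b hc).analyticOnNhd

theorem ordinaryHypergeometric_ode (hc : ∀ k : ℕ, c ≠ -k) {z : 𝕂} (hz : ‖z‖ < 1) :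
    z * (1 - z) * deriv (deriv (ordinaryHypergeometric a b c)) z
      + (c - (a + b + 1) * z) * deriv (ordinaryHypergeometric a b c) z
      - a * b * ordinaryHypergeometric a b c z = 0 := by
  have hF := hasFPowerSeriesOnBall_ordinaryHypergeometric a b hc
  have hz' : z ∈ Metric.eball (0 : 𝕂) 1 := by
    rwa [← ENNReal.ofReal_one, Metric.eball_ofReal, mem_ball_zero_iff]
  have hcoeff (n : ℕ) : (ordinaryHypergeometricSeries 𝕂 a b c).coeff n =
      ordinaryHypergeometricCoefficient a b c n := coeff_ofScalars
  have h0 := hF.hasSum_coeff_mul_pow hz'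
  have h1 := hF.hasFPowerSeriesOnBall_deriv.hasSum_coeff_mul_pow hz'
  have hz1 := hF.hasSum_mul_deriv hz'
  have hz2 := hF.hasSum_mul_deriv_deriv hz'
  have hzz2 := hF.hasSum_sq_mul_deriv_deriv hz'
  simp only [coeff_derivScalarSeries, nsmul_eq_mul, hcoeff] at h0 h1 hz1 hz2 hzz2
  have lhs := hz2.add (h1.mul_left c)
  have rhs := (hzz2.add (hz1.mul_left (a + b + 1))).add (h0.mul_left (a * b))
  have key := lhs.unique (rhs.congr_fun fun n => ?_)
  · linear_combination key
  · push_cast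
    linear_combination (z ^ n) * mul_ordinaryHypergeometricCoefficient_succ a b hc n

end Hypergeometric

section CubicTransformation

def cubicSubst (x : ℂ) : ℂ := x * (4 * x - 3) ^ 2

theorem differentiable_cubicSubst : Differentiable ℂ cubicSubst := by
  unfold cubicSubst
  fun_prop

theorem hasDerivAt_cubicSubst (x : ℂ) : HasDerivAt cubicSubst (3 * (4 * x - 3) * (4 * x - 1)) x :=
  ((hasDerivAt_id' x).fun_mul ((((hasDerivAt_id' x).const_mul 4).sub_const 3).fun_pow 2))
    |>.congr_deriv (by push_cast; ring)

theorem deriv_cubicSubst : deriv cubicSubst = fun x => 3 * (4 * x - 3) * (4 * x - 1) :=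
  funext fun x => (hasDerivAt_cubicSubst x).deriv

theorem deriv_deriv_cubicSubst (x : ℂ) : deriv (deriv cubicSubst) x = 96 * x - 48 := by
  rw [deriv_cubicSubst]
  exact ((((hasDerivAt_id' x).const_mul 4).sub_const 3).const_mul 3 |>.fun_mul
    (((hasDerivAt_id' x).const_mul 4).sub_const 1)).congr_deriv (by ring) |>.deriv

theorem satisfiesHeunAt_comp_cubicSubst {a b x : ℂ} {F : ℂ → ℂ}
    (hF : AnalyticAt ℂ F (cubicSubst x)) (hx₀ : x ≠ 0) (hx₁ : x ≠ 1) (hx₄ : x ≠ 1 / 4)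
    (hgauss : cubicSubst x * (1 - cubicSubst x) * deriv (deriv F) (cubicSubst x)
      + (1 / 2 - (a + b + 1) * cubicSubst x) * deriv F (cubicSubst x)
      - a * b * F (cubicSubst x) = 0) :
    SatisfiesHeunAt (1 / 4) (9 * a * b / 4) (3 * a) (3 * b) (1 / 2) (a + b + 1 / 2)
      (F ∘ cubicSubst) x := by
  have hp : AnalyticAt ℂ cubicSubst x := differentiable_cubicSubst.analyticAt x
  refine ⟨(hF.comp hp).differentiableAt, (hF.comp hp).deriv.differentiableAt, ?_⟩
  rw [hF.deriv_deriv_comp hp, deriv_deriv_cubicSubst,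
    deriv_comp x hF.differentiableAt hp.differentiableAt, deriv_cubicSubst]
  have h₁ : x - 1 ≠ 0 := sub_ne_zero.2 hx₁
  have h₄ : 4 * x - 1 ≠ 0 := fun h => hx₄ (by linear_combination h / 4)
  simp only [smul_eq_mul, Function.comp_apply]
  generalize F (cubicSubst x) = F₀, deriv F (cubicSubst x) = F₁,
    deriv (deriv F) (cubicSubst x) = F₂ at hgauss ⊢
  unfold cubicSubst at hgauss
  field_simp
  -- the ratio of the `F₂`-coefficients, `2x(x - 1)(4x - 1) · cubicSubst'(x)² / (z(1 - z))`
  linear_combination (-18 * (4 * x - 1)) * hgauss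

end CubicTransformation

theorem stmt10 (a b : ℂ) :
    ∃ U : Set ℂ, IsOpen U ∧ (0 : ℂ) ∈ U ∧ ∀ x ∈ U, x ≠ (0 : ℂ) → x ≠ (1 : ℂ) → x ≠ (1/4 : ℂ) →
      SatisfiesHeunAt (1/4) (9*a*b/4) (3*a) (3*b) (1/2) (a + b + 1/2)
        (fun x : ℂ => ordinaryHypergeometric a b (1/2) (x*(4*x-3)^2)) x := by
  have hc (k : ℕ) : (1 / 2 : ℂ) ≠ -k := fun h => by
    have hre := congrArg re h
    norm_num at hre
    linarith [(k.cast_nonneg : (0 : ℝ) ≤ k)]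
  refine ⟨cubicSubst ⁻¹' Metric.ball 0 1,
    Metric.isOpen_ball.preimage differentiable_cubicSubst.continuous, by simp [cubicSubst],
    fun x hx hx₀ hx₁ hx₄ => ?_⟩
  exact satisfiesHeunAt_comp_cubicSubst (analyticOnNhd_ordinaryHypergeometric a b hc _ hx)
    hx₀ hx₁ hx₄ (ordinaryHypergeometric_ode a b hc (mem_ball_zero_iff.mp hx))
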